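/- Uncompressed homogeneous Hertzian chains admit no nontrivial time-periodic breathers: if $(x_n)_{n\in\mathbb{Z}}$ is a $T$-periodic solution of $\ddot{x}_n = (x_{n-1}-x_n)_+^{3/2} - (x_n - x_{n+1})_+^{3/2}$ with $\lim_{n\to+\infty}\|x_n - x_{n-1}\|_{L^\infty} = 0$, then each $x_n$ is constant in time and $x_n \le x_{n+1}$ for all $n$. -/

import Mathlib

/-!
Write `F n = (x_{n-1} - x_n)_+^{3/2} ≥ 0` for the contact force on bead `n`, so that
`x_n'' = F n - F (n+1)`. Integrating over a period kills `x_n''`, hence the period integral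
of `F n` does not depend on `n`. Far out in the chain the relative displacements are uniformly
small, so that common value is arbitrarily small, i.e. zero. A nonnegative continuous function
with zero integral vanishes, so every contact force vanishes: the chain is nondecreasing, and each
`x_n` has zero acceleration, so it is affine and, being periodic, constant.
-/

open Function Filter Topology Set intervalIntegral

namespace Function.Periodic

variable {g : ℝ → ℝ} {T : ℝ}

protected theorem deriv (hg : Periodic g T) : Periodic (deriv g) T := fun t => by
  rw [← deriv_comp_add_const, show (fun s => g (s + T)) = g from funext hg]

theorem integral_deriv_eq_zero (hg : Periodic g T) (hd : ContDiff ℝ 1 g) (a : ℝ) :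
    ∫ t in a..a + T, deriv g t = 0 := by
  rw [integral_deriv_eq_sub (fun t _ => hd.differentiable one_ne_zero t)
    ((hd.continuous_deriv le_rfl).intervalIntegrable _ _), hg a, sub_self]

theorem is_const_of_deriv_deriv_eq_zero (hg : Periodic g T) (hT : T ≠ 0) (hd : ContDiff ℝ 2 g)
    (h2 : ∀ t, deriv (deriv g) t = 0) (t s : ℝ) : g t = g s := by
  have hd1 : ContDiff ℝ 1 (deriv g) := hd.deriv'
  have hslope : ∀ t, deriv g t = deriv g 0 :=
    fun t => is_const_of_deriv_eq_zero (hd1.differentiable one_ne_zero) h2 t 0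
  have hzero : T * deriv g 0 = 0 := by
    simpa [hslope] using hg.integral_deriv_eq_zero (hd.of_le (by norm_num)) 0
  have hslope0 : ∀ t, deriv g t = 0 := fun t => by
    rw [hslope, (mul_eq_zero.1 hzero).resolve_left hT]
  exact is_const_of_deriv_eq_zero (hd.differentiable two_ne_zero) hslope0 t s

end Function.Periodic

theorem eq_zero_on_Icc_of_integral_eq_zero {f : ℝ → ℝ} {a b : ℝ} (hab : a < b)
    (hf : Continuous f) (hnn : ∀ t, 0 ≤ f t) (h : ∫ t in a..b, f t = 0) :
    ∀ t ∈ Icc a b, f t = 0 := by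
  by_contra! ⟨t, ht, hne⟩
  have hlt : ∫ _ in a..b, (0 : ℝ) < ∫ s in a..b, f s :=
    integral_lt_integral_of_continuousOn_of_le_of_exists_lt hab continuousOn_const
      hf.continuousOn (fun s _ => hnn s) ⟨t, ht, (hnn t).lt_of_ne hne.symm⟩
  simp [h] at hlt

noncomputable def hertzForce (x : ℤ → ℝ → ℝ) (n : ℤ) (t : ℝ) : ℝ :=
  max (x (n - 1) t - x n t) 0 ^ ((3 : ℝ) / 2)

section HertzChain

variable {x : ℤ → ℝ → ℝ} {T : ℝ}

theorem hertzForce_nonneg (n : ℤ) (t : ℝ) : 0 ≤ hertzForce x n t :=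
  Real.rpow_nonneg (le_max_right _ _) _

theorem hertzForce_eq_zero_iff {n : ℤ} {t : ℝ} : hertzForce x n t = 0 ↔ x (n - 1) t ≤ x n t := by
  rw [hertzForce, Real.rpow_eq_zero_iff_of_nonneg (le_max_right _ _), max_eq_right_iff, sub_nonpos]
  norm_num

theorem hertzForce_le_of_abs_le {n : ℤ} {t ε : ℝ} (hε : 0 ≤ ε) (h : |x n t - x (n - 1) t| ≤ ε) :
    hertzForce x n t ≤ ε ^ ((3 : ℝ) / 2) := by
  refine Real.rpow_le_rpow (le_max_right _ _) (max_le ?_ hε) (by norm_num)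
  linarith [(abs_le.1 h).1]

theorem continuous_hertzForce (hx : ∀ n, Continuous (x n)) (n : ℤ) :
    Continuous (hertzForce x n) :=
  ((hx (n - 1)).sub (hx n)).max continuous_const |>.rpow_const fun _ => Or.inr (by norm_num)

theorem integral_hertzForce_succ (hx : ∀ n, ContDiff ℝ 2 (x n)) (hper : ∀ n, Periodic (x n) T)
    (heq : ∀ n t, deriv (deriv (x n)) t = hertzForce x n t - hertzForce x (n + 1) t)
    (n : ℤ) (a : ℝ) :
    ∫ t in a..a + T, hertzForce x (n + 1) t = ∫ t in a..a + T, hertzForce x n t := by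
  have hF := continuous_hertzForce fun n => (hx n).continuous
  have hzero := (hper n).deriv.integral_deriv_eq_zero (hx n).deriv' a
  rw [funext (heq n), integral_sub ((hF n).intervalIntegrable _ _)
    ((hF (n + 1)).intervalIntegrable _ _)] at hzero
  linarith

theorem integral_hertzForce_eq_zero (hx : ∀ n, ContDiff ℝ 2 (x n)) (hT : 0 < T)
    (hper : ∀ n, Periodic (x n) T)
    (heq : ∀ n t, deriv (deriv (x n)) t = hertzForce x n t - hertzForce x (n + 1) t)
    (hloc : ∀ ε > (0 : ℝ), ∃ N : ℤ, ∀ n ≥ N, ∀ t, |x n t - x (n - 1) t| ≤ ε) (n : ℤ) (a : ℝ) :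
    ∫ t in a..a + T, hertzForce x n t = 0 := by
  set I : ℤ → ℝ := fun m => ∫ t in a..a + T, hertzForce x m t
  have hperiodic : Periodic I 1 := fun k => integral_hertzForce_succ hx hper heq k a
  have hI : ∀ m, I m = I n := fun m => by
    simpa using (hperiodic.int_mul_eq m).trans (hperiodic.int_mul_eq n).symm
  have hle : ∀ ε > (0 : ℝ), I n ≤ T * ε ^ ((3 : ℝ) / 2) := fun ε hε => by
    obtain ⟨N, hN⟩ := hloc ε hε
    calc I n = I N := (hI N).symm
      _ ≤ ∫ _ in a..a + T, ε ^ ((3 : ℝ) / 2) :=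
        integral_mono_on (by linarith)
          ((continuous_hertzForce (fun n => (hx n).continuous) N).intervalIntegrable _ _)
          intervalIntegrable_const fun t _ => hertzForce_le_of_abs_le hε.le (hN N le_rfl t)
      _ = T * ε ^ ((3 : ℝ) / 2) := by simp
  have hlim : Tendsto (fun ε : ℝ => T * ε ^ ((3 : ℝ) / 2)) (𝓝[>] 0) (𝓝 0) := by
    have : ContinuousAt (fun ε : ℝ => T * ε ^ ((3 : ℝ) / 2)) 0 :=
      continuousAt_const.mul (Real.continuousAt_rpow_const _ _ (Or.inr (by norm_num)))
    simpa using this.tendsto.mono_left nhdsWithin_le_nhds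
  exact le_antisymm (ge_of_tendsto hlim (eventually_nhdsWithin_of_forall hle))
    (integral_nonneg (by linarith) fun t _ => hertzForce_nonneg n t)

end HertzChain

/-- Uncompressed homogeneous Hertzian chains admit no nontrivial time-periodic
breathers: any `T`-periodic solution of
`x_n'' = (x_{n-1}-x_n)_+^{3/2} - (x_n-x_{n+1})_+^{3/2}` whose relative
displacements tend to `0` uniformly in time as `n → +∞` is static and
nondecreasing in `n`. -/
theorem no_breathers_hertz_chain
    (x : ℤ → ℝ → ℝ) (hx : ∀ n, ContDiff ℝ 2 (x n))
    (T : ℝ) (hT : 0 < T)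
    (hper : ∀ n t, x n (t + T) = x n t)
    (heq : ∀ n t, deriv (deriv (x n)) t
      = (max (x (n-1) t - x n t) 0) ^ ((3:ℝ)/2)
        - (max (x n t - x (n+1) t) 0) ^ ((3:ℝ)/2))
    (hloc : ∀ ε > (0:ℝ), ∃ N : ℤ, ∀ n ≥ N, ∀ t, |x n t - x (n-1) t| ≤ ε) :
    (∀ n t s, x n t = x n s) ∧ (∀ n t, x n t ≤ x (n+1) t) := by
  have heq' : ∀ n t, deriv (deriv (x n)) t = hertzForce x n t - hertzForce x (n + 1) t := by
    simpa [hertzForce] using heq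
  have hF : ∀ n t, hertzForce x n t = 0 := fun n t =>
    eq_zero_on_Icc_of_integral_eq_zero (by linarith)
      (continuous_hertzForce (fun n => (hx n).continuous) n) (hertzForce_nonneg n)
      (integral_hertzForce_eq_zero hx hT hper heq' hloc n t) t ⟨le_rfl, by linarith⟩
  refine ⟨fun n => Periodic.is_const_of_deriv_deriv_eq_zero (hper n) hT.ne' (hx n) fun t => ?_,
    fun n t => ?_⟩
  · rw [heq', hF, hF, sub_self]
  · simpa using hertzForce_eq_zero_iff.1 (hF (n + 1) t)
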